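/- arXiv:1511.00622 — 4 statements merged into one kernel-verified Lean document; each statement's English description precedes it below -/
import Mathlib

section
/- With S = {(1,1),(1,2),(2,1)}, a_S(ℓ₁,ℓ₂) = Σ_{k=0}^{ℓ₁} C(k, 2k−ℓ₁) · C(2k−ℓ₁, ℓ₂−k). -/
/-- Total number of `S`-alignments of lengths `ℓ`: `N × k` matrices over `ℕ`
(for any `k ≥ 0`) with all columns in `S` and `i`-th row summing to `ℓ i`. -/
noncomputable def alignCount (N : ℕ) (S : Set (Fin N → ℕ)) (ℓ : Fin N → ℕ) : ℕ :=
  Nat.card {A : Σ k : ℕ, Fin k → Fin N → ℕ //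
    (∀ j, A.2 j ∈ S) ∧ ∀ i, ∑ j, A.2 j i = ℓ i}

/-- Binomial coefficient `C(n, m)` for integer arguments, vanishing whenever
`m < 0`, `m > n`, or `n < 0`. -/
def chooseZ (n m : ℤ) : ℕ :=
  if 0 ≤ n ∧ 0 ≤ m ∧ m ≤ n then n.toNat.choose m.toNat else 0

open Finset

lemma colS {v : Fin 2 → ℕ} (h : v ∈ ({![1,1],![1,2],![2,1]} : Set (Fin 2 → ℕ))) :
    (v 0 = 1 ∨ v 0 = 2) ∧ (v 1 = 1 ∨ v 1 = 2) ∧ ¬(v 0 = 2 ∧ v 1 = 2) := by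
  rcases h with h|h|h <;> subst h <;> simp

lemma sum_eq (k : ℕ) (g : Fin k → ℕ) (h : ∀ j, g j = 1 ∨ g j = 2) :
    ∑ j, g j = k + (univ.filter (fun j => g j = 2)).card := by
  have h2 : ∀ j ∈ univ, g j = 1 + (if g j = 2 then 1 else 0) := by
    intro j _; rcases h j with h|h <;> simp [h]
  rw [Finset.sum_congr rfl h2, Finset.sum_add_distrib, Finset.sum_const, card_univ,
    Fintype.card_fin, smul_eq_mul, mul_one, Finset.card_filter]

lemma sum_ite_mem' (k : ℕ) (T : Finset (Fin k)) :
    ∑ j, (if j ∈ T then 2 else 1) = k + T.card := by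
  have h2 : ∀ j ∈ univ, (if j ∈ T then 2 else 1) = 1 + (if j ∈ T then 1 else 0) := by
    intro j _; split <;> rfl
  rw [Finset.sum_congr rfl h2, Finset.sum_add_distrib, Finset.sum_const, card_univ,
    Fintype.card_fin, smul_eq_mul, mul_one]
  congr 1
  rw [Finset.sum_ite_mem, univ_inter, Finset.sum_const, smul_eq_mul, mul_one]

/-- Matrices with `k` columns in `S` and given row sums correspond to pairs of
disjoint subsets of column indices (where the first resp. second row equals 2). -/
def perK (ℓ₁ ℓ₂ k : ℕ) :
    {f : Fin k → Fin 2 → ℕ // (∀ j, f j ∈ ({![1,1],![1,2],![2,1]} : Set (Fin 2 → ℕ))) ∧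
        ∀ i, ∑ j, f j i = ![ℓ₁, ℓ₂] i} ≃
    {p : Finset (Fin k) × Finset (Fin k) //
      Disjoint p.1 p.2 ∧ k + p.1.card = ℓ₁ ∧ k + p.2.card = ℓ₂} := by
  refine ⟨fun f => ⟨(univ.filter (fun j => f.1 j 0 = 2), univ.filter (fun j => f.1 j 1 = 2)),
      ?_, ?_, ?_⟩,
    fun p => ⟨fun j => ![if j ∈ p.1.1 then 2 else 1, if j ∈ p.1.2 then 2 else 1], ?_, ?_⟩,
    ?_, ?_⟩
  · rw [Finset.disjoint_left]
    intro j h1 h2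
    simp only [mem_filter, mem_univ, true_and] at h1 h2
    exact (colS (f.2.1 j)).2.2 ⟨h1, h2⟩
  · have := f.2.2 0
    simp only [Matrix.cons_val_zero] at this
    exact (sum_eq k _ (fun j => (colS (f.2.1 j)).1)).symm.trans this
  · have := f.2.2 1
    simp only [Matrix.cons_val_one, Matrix.head_cons] at this
    exact (sum_eq k _ (fun j => (colS (f.2.1 j)).2.1)).symm.trans this
  · intro j
    by_cases h1 : j ∈ p.1.1 <;> by_cases h2 : j ∈ p.1.2
    · exact absurd (Finset.disjoint_left.mp p.2.1 h1 h2) (by simp)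
    · simp only [h1, h2, if_true, if_false]
      exact Or.inr (Or.inr rfl)
    · simp only [h1, h2, if_true, if_false]
      exact Or.inr (Or.inl rfl)
    · simp only [h1, h2, if_false]
      exact Or.inl rfl
  · intro i
    fin_cases i
    · simpa using (sum_ite_mem' k p.1.1).trans p.2.2.1
    · simpa using (sum_ite_mem' k p.1.2).trans p.2.2.2
  · intro f
    apply Subtype.ext
    funext j
    funext i
    fin_cases i
    · simp only [Matrix.cons_val_zero, mem_filter, mem_univ, true_and]
      rcases (colS (f.2.1 j)).1 with h|h <;> simp [h]
    · simp only [Matrix.cons_val_one, Matrix.head_cons, mem_filter, mem_univ, true_and]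
      rcases (colS (f.2.1 j)).2.1 with h|h <;> simp [h]
  · intro p
    apply Subtype.ext
    apply Prod.ext <;> ext j <;> simp

lemma card_pairs (k a b : ℕ) :
    Nat.card {p : Finset (Fin k) × Finset (Fin k) //
      Disjoint p.1 p.2 ∧ p.1.card = a ∧ p.2.card = b} =
      k.choose a * (k - a).choose b := by
  have e : {p : Finset (Fin k) × Finset (Fin k) //
      Disjoint p.1 p.2 ∧ p.1.card = a ∧ p.2.card = b} ≃
      Σ T : (Finset.univ.powersetCard a : Finset (Finset (Fin k))),
        ((↑T : Finset (Fin k))ᶜ.powersetCard b : Finset (Finset (Fin k))) := by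
    refine ⟨fun p => ⟨⟨p.1.1, ?_⟩, ⟨p.1.2, ?_⟩⟩, fun q => ⟨(q.1.1, q.2.1), ?_, ?_, ?_⟩, ?_, ?_⟩
    · simp [mem_powersetCard, p.2.2.1]
    · simp only [mem_powersetCard]
      exact ⟨p.2.1.symm.le_compl_right, p.2.2.2⟩
    · have := q.2.2
      simp only [mem_powersetCard] at this
      exact disjoint_compl_right.mono_right this.1
    · have := q.1.2; simp only [mem_powersetCard] at this; exact this.2
    · have := q.2.2; simp only [mem_powersetCard] at this; exact this.2
    · intro p; rfl
    · intro q; rfl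
  rw [Nat.card_congr e, Nat.card_eq_fintype_card, Fintype.card_sigma]
  have h1 : ∀ T : (Finset.univ.powersetCard a : Finset (Finset (Fin k))),
      Fintype.card ((↑T : Finset (Fin k))ᶜ.powersetCard b : Finset (Finset (Fin k)))
        = (k - a).choose b := by
    intro T
    rw [Fintype.card_coe, card_powersetCard, card_compl, Fintype.card_fin]
    congr 1
    have := T.2; simp only [mem_powersetCard] at this
    rw [this.2]
  simp only [h1]
  rw [Finset.sum_const, card_univ, Fintype.card_coe, card_powersetCard, card_univ,
    Fintype.card_fin, smul_eq_mul]

lemma chooseZ_natCast (n m : ℕ) : chooseZ n m = n.choose m := by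
  unfold chooseZ
  split_ifs with h
  · simp
  · symm
    apply Nat.choose_eq_zero_of_lt
    push_cast at h
    omega

lemma chooseZ_neg (n m : ℤ) (h : m < 0) : chooseZ n m = 0 := by
  unfold chooseZ
  rw [if_neg]
  omega

def sigmaSplit {F : ℕ → Type*} (P : (Σ k, F k) → Prop) :
    {A : Σ k, F k // P A} ≃ Σ k, {f : F k // P ⟨k, f⟩} :=
  ⟨fun a => ⟨a.1.1, a.1.2, a.2⟩, fun a => ⟨⟨a.1, a.2.1⟩, a.2.2⟩, fun _ => rfl, fun _ => rfl⟩

def sigmaTrunc {G : ℕ → Type*} (n : ℕ) (h : ∀ k, G k → k < n) :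
    (Σ k : ℕ, G k) ≃ Σ k : Fin n, G ↑k :=
  ⟨fun x => ⟨⟨x.1, h _ x.2⟩, x.2⟩, fun x => ⟨↑x.1, x.2⟩, fun _ => rfl, fun _ => rfl⟩

lemma term_eval (ℓ₁ ℓ₂ k : ℕ) (hk : k ≤ ℓ₁) :
    Nat.card {p : Finset (Fin k) × Finset (Fin k) //
      Disjoint p.1 p.2 ∧ k + p.1.card = ℓ₁ ∧ k + p.2.card = ℓ₂} =
      chooseZ k (2 * k - ℓ₁) * chooseZ (2 * k - ℓ₁) (ℓ₂ - k) := by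
  by_cases hk2 : k ≤ ℓ₂
  · have e := Equiv.subtypeEquivRight
      (p := fun p : Finset (Fin k) × Finset (Fin k) =>
        Disjoint p.1 p.2 ∧ k + p.1.card = ℓ₁ ∧ k + p.2.card = ℓ₂)
      (q := fun p => Disjoint p.1 p.2 ∧ p.1.card = ℓ₁ - k ∧ p.2.card = ℓ₂ - k)
      (fun p => by constructor <;> (rintro ⟨h1, h2, h3⟩; exact ⟨h1, by omega, by omega⟩))
    rw [Nat.card_congr e, card_pairs]
    by_cases h3 : ℓ₁ ≤ 2 * k
    · have c1 : (2 * (k : ℤ) - ℓ₁) = ((2 * k - ℓ₁ : ℕ) : ℤ) := by omega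
      have c2 : ((ℓ₂ : ℤ) - k) = ((ℓ₂ - k : ℕ) : ℤ) := by omega
      rw [c1, c2, chooseZ_natCast, chooseZ_natCast]
      have e1 : k - (ℓ₁ - k) = 2 * k - ℓ₁ := by omega
      have e2 : k.choose (2 * k - ℓ₁) = k.choose (ℓ₁ - k) := by
        rw [← e1]; exact Nat.choose_symm (by omega)
      rw [e2, e1]
    · rw [Nat.choose_eq_zero_of_lt (by omega), chooseZ_neg _ _ (by omega), zero_mul, zero_mul]
  · haveI : IsEmpty {p : Finset (Fin k) × Finset (Fin k) //
        Disjoint p.1 p.2 ∧ k + p.1.card = ℓ₁ ∧ k + p.2.card = ℓ₂} :=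
      ⟨fun p => absurd p.2.2.2 (by omega)⟩
    rw [Nat.card_of_isEmpty,
      show chooseZ (2 * (k : ℤ) - ℓ₁) ((ℓ₂ : ℤ) - k) = 0 from chooseZ_neg _ _ (by omega),
      mul_zero]

theorem stmt_5 (ℓ₁ ℓ₂ : ℕ) :
    alignCount 2 {![1, 1], ![1, 2], ![2, 1]} ![ℓ₁, ℓ₂] =
      ∑ k ∈ Finset.range (ℓ₁ + 1),
        chooseZ k (2 * k - ℓ₁) * chooseZ (2 * k - ℓ₁) (ℓ₂ - k) := by
  classical
  have hb : ∀ (k : ℕ),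
      {f : Fin k → Fin 2 → ℕ // (∀ j, f j ∈ ({![1,1],![1,2],![2,1]} : Set (Fin 2 → ℕ))) ∧
        ∀ i, ∑ j, f j i = ![ℓ₁, ℓ₂] i} → k < ℓ₁ + 1 := by
    intro k f
    have h0 := f.2.2 0
    simp only [Matrix.cons_val_zero] at h0
    have : (k : ℕ) = ∑ _j : Fin k, 1 := by simp
    have hle : ∑ _j : Fin k, 1 ≤ ∑ j, f.1 j 0 := by
      apply Finset.sum_le_sum
      intro j _
      rcases (colS (f.2.1 j)).1 with h|h <;> omega
    omega
  have e_total : {A : Σ k : ℕ, Fin k → Fin 2 → ℕ //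
      (∀ j, A.2 j ∈ ({![1,1],![1,2],![2,1]} : Set (Fin 2 → ℕ))) ∧
        ∀ i, ∑ j, A.2 j i = ![ℓ₁, ℓ₂] i} ≃
      Σ k : Fin (ℓ₁ + 1), {p : Finset (Fin ↑k) × Finset (Fin ↑k) //
        Disjoint p.1 p.2 ∧ ↑k + p.1.card = ℓ₁ ∧ ↑k + p.2.card = ℓ₂} :=
    (sigmaSplit _).trans ((sigmaTrunc (ℓ₁ + 1) hb).trans
      (Equiv.sigmaCongrRight (fun k => perK ℓ₁ ℓ₂ ↑k)))
  rw [alignCount, Nat.card_congr e_total, Nat.card_eq_fintype_card, Fintype.card_sigma]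
  rw [Fin.sum_univ_eq_sum_range (fun k => Fintype.card
    {p : Finset (Fin k) × Finset (Fin k) //
      Disjoint p.1 p.2 ∧ k + p.1.card = ℓ₁ ∧ k + p.2.card = ℓ₂})]
  refine Finset.sum_congr rfl (fun k hk => ?_)
  rw [← Nat.card_eq_fintype_card]
  exact term_eval ℓ₁ ℓ₂ k (by simpa using Nat.lt_succ_iff.mp (Finset.mem_range.mp hk))
end

section
/- With S = {(1,1),(1,2),(2,1)}, a_S(ℓ₁,ℓ₂) = Σ_{k=⌈max(ℓ₁,ℓ₂)/2⌉}^{min(ℓ₁,ℓ₂)} Σ_{j≥0} (−1)^j · C(k,j) · C(k−j, ℓ₁−k−j) · C(k−j, ℓ₂−k−j). -/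
/-!
Splitting off the all-ones background, a `2 × k` alignment is the same as a pair of disjoint sets
`P₁, P₂ ⊆ Fin k` (the positions of its `(2,1)`- and `(1,2)`-columns) with `k + #P₁ = ℓ₁` and
`k + #P₂ = ℓ₂`, so `⌈max ℓ / 2⌉ ≤ k ≤ min ℓ`. Disjoint pairs of prescribed sizes are counted by
inclusion–exclusion over a common part `J ⊆ P₁ ∩ P₂`: there are `C(k, j)` choices of `J` with
`#J = j`, and `C(k - j, #Pᵢ - j)` choices of each `Pᵢ ⊇ J`.
-/

open Finset

lemma chooseZ_of_neg (n : ℤ) {m : ℤ} (hm : m < 0) : chooseZ n m = 0 :=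
  if_neg (by omega)

section InclusionExclusion

variable {α : Type*} [Fintype α] [DecidableEq α]

lemma card_filter_powersetCard_univ_subset (J : Finset α) (m : ℕ) :
    (#{T ∈ (univ : Finset α).powersetCard m | J ⊆ T} : ℤ) =
      chooseZ (Fintype.card α - #J) (m - #J) := by
  by_cases hJm : #J ≤ m
  · rw [card_filter_powersetCard_subset J univ m (subset_univ J) hJm, card_univ,
      ← Nat.cast_sub (card_le_univ J), ← Nat.cast_sub hJm, chooseZ_natCast]
  · rw [chooseZ_of_neg _ (by omega), Nat.cast_zero, Nat.cast_eq_zero, card_eq_zero,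
      filter_eq_empty_iff]
    intro T hT hJT
    have := card_le_card hJT
    rw [mem_powersetCard] at hT
    omega

lemma ite_disjoint_eq_sum_powerset (s t : Finset α) :
    (if Disjoint s t then 1 else 0 : ℤ) =
      ∑ J ∈ univ.powerset, if J ⊆ s ∧ J ⊆ t then (-1 : ℤ) ^ #J else 0 := by
  have : ({J ∈ univ.powerset | J ⊆ s ∧ J ⊆ t} : Finset (Finset α)) = (s ∩ t).powerset := by
    ext J
    simp only [mem_filter, mem_powerset, subset_univ, true_and, subset_inter_iff]
  rw [← sum_filter, this, sum_powerset_neg_one_pow_card]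
  exact if_congr disjoint_iff_inter_eq_empty rfl rfl

theorem card_filter_disjoint_powersetCard_product (m₁ m₂ : ℕ) :
    (#{p ∈ (univ : Finset α).powersetCard m₁ ×ˢ univ.powersetCard m₂ | Disjoint p.1 p.2} : ℤ) =
      ∑ j ∈ range (Fintype.card α + 1), (-1 : ℤ) ^ j * (Fintype.card α).choose j *
        chooseZ (Fintype.card α - j) (m₁ - j) * chooseZ (Fintype.card α - j) (m₂ - j) := by
  calc (#{p ∈ (univ : Finset α).powersetCard m₁ ×ˢ univ.powersetCard m₂ | Disjoint p.1 p.2} : ℤ)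
      = ∑ p ∈ univ.powersetCard m₁ ×ˢ univ.powersetCard m₂,
          ∑ J ∈ (univ : Finset α).powerset, if J ⊆ p.1 ∧ J ⊆ p.2 then (-1 : ℤ) ^ #J else 0 := by
        simp_rw [← ite_disjoint_eq_sum_powerset]
        rw [card_filter]
        push_cast
        rfl
    _ = ∑ J ∈ (univ : Finset α).powerset, (-1 : ℤ) ^ #J *
          (#{T ∈ univ.powersetCard m₁ | J ⊆ T} * #{T ∈ univ.powersetCard m₂ | J ⊆ T} : ℕ) := by
        rw [sum_comm]
        refine sum_congr rfl fun J _ => ?_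
        rw [← sum_filter, sum_const, ← card_product, ← filter_product, nsmul_eq_mul, mul_comm]
    _ = ∑ J ∈ (univ : Finset α).powerset, (-1 : ℤ) ^ #J *
          (chooseZ (Fintype.card α - #J) (m₁ - #J) * chooseZ (Fintype.card α - #J) (m₂ - #J)) := by
        push_cast
        simp_rw [card_filter_powersetCard_univ_subset]
    _ = _ := by
        rw [sum_powerset_apply_card (fun j => (-1) ^ j *
          (chooseZ (Fintype.card α - j) (m₁ - j) * chooseZ (Fintype.card α - j) (m₂ - j) : ℤ)),
          card_univ]
        refine sum_congr rfl fun j _ => ?_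
        rw [nsmul_eq_mul]
        ring

end InclusionExclusion

local notation "𝒮" => ({![1, 1], ![1, 2], ![2, 1]} : Set (Fin 2 → ℕ))

def raisedColumn (a b : Bool) : Fin 2 → ℕ :=
  ![if a then 2 else 1, if b then 2 else 1]

lemma raisedColumn_mem_iff (a b : Bool) : raisedColumn a b ∈ 𝒮 ↔ ¬(a ∧ b) := by
  cases a <;> cases b <;> simp [raisedColumn, funext_iff, Fin.forall_fin_two]

lemma raisedColumn_eq_self {c : Fin 2 → ℕ} (hc : c ∈ 𝒮) :
    raisedColumn (c 0 = 2) (c 1 = 2) = c := by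
  rcases hc with rfl | rfl | rfl <;> ext i <;> fin_cases i <;> simp [raisedColumn]

lemma sum_ite_mem_two_one {ι : Type*} [Fintype ι] [DecidableEq ι] (s : Finset ι) :
    ∑ j, (if j ∈ s then 2 else 1 : ℕ) = Fintype.card ι + #s := by
  have : ∀ j, (if j ∈ s then 2 else 1 : ℕ) = 1 + if j ∈ s then 1 else 0 := fun j => by
    split_ifs <;> rfl
  simp only [this, sum_add_distrib, sum_boole, sum_const, card_univ, smul_eq_mul, mul_one,
    filter_mem_eq_inter, univ_inter, Nat.cast_id]

section Alignment

variable {k : ℕ}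

def matrixOfPair (p : Finset (Fin k) × Finset (Fin k)) : Fin k → Fin 2 → ℕ :=
  fun j => raisedColumn (j ∈ p.1) (j ∈ p.2)

def pairOfMatrix (A : Fin k → Fin 2 → ℕ) : Finset (Fin k) × Finset (Fin k) :=
  (univ.filter fun j => A j 0 = 2, univ.filter fun j => A j 1 = 2)

lemma matrixOfPair_pairOfMatrix {A : Fin k → Fin 2 → ℕ} (hA : ∀ j, A j ∈ 𝒮) :
    matrixOfPair (pairOfMatrix A) = A :=
  funext fun j => by simpa [matrixOfPair, pairOfMatrix] using raisedColumn_eq_self (hA j)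

lemma pairOfMatrix_matrixOfPair (p : Finset (Fin k) × Finset (Fin k)) :
    pairOfMatrix (matrixOfPair p) = p := by
  ext j <;> simp [pairOfMatrix, matrixOfPair, raisedColumn]

lemma matrixOfPair_mem_iff (p : Finset (Fin k) × Finset (Fin k)) :
    (∀ j, matrixOfPair p j ∈ 𝒮) ↔ Disjoint p.1 p.2 := by
  simp only [matrixOfPair, raisedColumn_mem_iff, disjoint_left, not_and, decide_eq_true_eq]

lemma sum_matrixOfPair_eq_iff (p : Finset (Fin k) × Finset (Fin k)) (ℓ₁ ℓ₂ : ℕ) :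
    (∀ i, ∑ j, matrixOfPair p j i = ![ℓ₁, ℓ₂] i) ↔ k + #p.1 = ℓ₁ ∧ k + #p.2 = ℓ₂ := by
  simp [Fin.forall_fin_two, matrixOfPair, raisedColumn, sum_ite_mem_two_one]

def columnPairs (ℓ₁ ℓ₂ k : ℕ) : Finset (Finset (Fin k) × Finset (Fin k)) :=
  {p | Disjoint p.1 p.2 ∧ k + #p.1 = ℓ₁ ∧ k + #p.2 = ℓ₂}

lemma mem_columnPairs {ℓ₁ ℓ₂ : ℕ} {p : Finset (Fin k) × Finset (Fin k)} :
    p ∈ columnPairs ℓ₁ ℓ₂ k ↔ Disjoint p.1 p.2 ∧ k + #p.1 = ℓ₁ ∧ k + #p.2 = ℓ₂ := by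
  simp [columnPairs]

lemma matrixOfPair_isAlignment_iff (p : Finset (Fin k) × Finset (Fin k)) (ℓ₁ ℓ₂ : ℕ) :
    ((∀ j, matrixOfPair p j ∈ 𝒮) ∧ ∀ i, ∑ j, matrixOfPair p j i = ![ℓ₁, ℓ₂] i) ↔
      p ∈ columnPairs ℓ₁ ℓ₂ k := by
  rw [matrixOfPair_mem_iff, sum_matrixOfPair_eq_iff, mem_columnPairs]

def alignmentEquiv (ℓ₁ ℓ₂ : ℕ) :
    {A : Σ k : ℕ, Fin k → Fin 2 → ℕ // (∀ j, A.2 j ∈ 𝒮) ∧ ∀ i, ∑ j, A.2 j i = ![ℓ₁, ℓ₂] i} ≃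
      Σ k : ℕ, columnPairs ℓ₁ ℓ₂ k where
  toFun A := ⟨A.1.1, pairOfMatrix A.1.2,
    (matrixOfPair_isAlignment_iff _ ℓ₁ ℓ₂).1 (by rw [matrixOfPair_pairOfMatrix A.2.1]; exact A.2)⟩
  invFun p := ⟨⟨p.1, matrixOfPair p.2.1⟩, (matrixOfPair_isAlignment_iff _ ℓ₁ ℓ₂).2 p.2.2⟩
  left_inv A := Subtype.ext (Sigma.ext rfl (heq_of_eq (matrixOfPair_pairOfMatrix A.2.1)))
  right_inv p := Sigma.ext rfl (heq_of_eq (Subtype.ext (pairOfMatrix_matrixOfPair p.2.1)))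

lemma alignCount_eq_sum_card_columnPairs (ℓ₁ ℓ₂ : ℕ) :
    alignCount 2 𝒮 ![ℓ₁, ℓ₂] =
      ∑ k ∈ Icc ((max ℓ₁ ℓ₂ + 1) / 2) (min ℓ₁ ℓ₂), #(columnPairs ℓ₁ ℓ₂ k) := by
  have h_support : ∀ k, columnPairs ℓ₁ ℓ₂ k → k ∈ Icc ((max ℓ₁ ℓ₂ + 1) / 2) (min ℓ₁ ℓ₂) := by
    rintro k ⟨p, hp⟩
    obtain ⟨-, h₁, h₂⟩ := mem_columnPairs.1 hp
    have := card_le_univ p.1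
    have := card_le_univ p.2
    rw [Fintype.card_fin] at *
    rw [mem_Icc]
    omega
  rw [alignCount, Nat.card_congr (alignmentEquiv ℓ₁ ℓ₂),
    ← Nat.card_congr (Equiv.sigmaSubtypeEquivOfSubset _ _ h_support), Nat.card_sigma]
  simp only [Nat.card_eq_fintype_card, Fintype.card_coe]
  exact sum_coe_sort _ fun k => #(columnPairs ℓ₁ ℓ₂ k)

end Alignment

lemma card_columnPairs {ℓ₁ ℓ₂ k : ℕ} (h₁ : k ≤ ℓ₁) (h₂ : k ≤ ℓ₂) :
    (#(columnPairs ℓ₁ ℓ₂ k) : ℤ) = ∑ j ∈ range (k + 1), (-1 : ℤ) ^ j * k.choose j *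
        chooseZ (k - j) (ℓ₁ - k - j) * chooseZ (k - j) (ℓ₂ - k - j) := by
  have : columnPairs ℓ₁ ℓ₂ k =
      {p ∈ (univ : Finset (Fin k)).powersetCard (ℓ₁ - k) ×ˢ
        (univ : Finset (Fin k)).powersetCard (ℓ₂ - k) | Disjoint p.1 p.2} := by
    ext p
    simp only [mem_columnPairs, mem_filter, mem_product, mem_powersetCard, subset_univ, true_and]
    rw [and_comm]
    exact and_congr (by omega) Iff.rfl
  rw [this, card_filter_disjoint_powersetCard_product, Fintype.card_fin]
  push_cast [Nat.cast_sub h₁, Nat.cast_sub h₂]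
  rfl

theorem stmt_6 (ℓ₁ ℓ₂ : ℕ) :
    (alignCount 2 {![1, 1], ![1, 2], ![2, 1]} ![ℓ₁, ℓ₂] : ℤ) =
      ∑ k ∈ Finset.Icc ((max ℓ₁ ℓ₂ + 1) / 2) (min ℓ₁ ℓ₂),
        ∑ j ∈ Finset.range (k + 1),
          (-1 : ℤ) ^ j * k.choose j *
            chooseZ (k - j) (ℓ₁ - k - j) * chooseZ (k - j) (ℓ₂ - k - j) := by
  rw [alignCount_eq_sum_card_columnPairs, Nat.cast_sum]
  refine sum_congr rfl fun k hk => ?_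
  rw [mem_Icc] at hk
  exact card_columnPairs (by omega) (by omega)
end

section
/- With S = {(s₁,…,s_N) : 0 ≤ sᵢ ≤ 1} \ {(0,…,0)}, a_S(ℓ₁,…,ℓ_N) = Σ_{k=max(ℓ₁,…,ℓ_N)}^{ℓ₁+⋯+ℓ_N} Σ_{j=0}^{k} (−1)^j · C(k,j) · ∏_{i=1}^{N} C(k−j, ℓᵢ). -/
open Finset

namespace Alignment

variable {N k : ℕ}

def ofRowSets (s : Fin N → Finset (Fin k)) : Fin k → Fin N → ℕ :=
  fun j i => if j ∈ s i then 1 else 0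

theorem ofRowSets_injective : Function.Injective (ofRowSets : (Fin N → Finset (Fin k)) → _) := by
  intro s t h
  funext i
  ext j
  have hji := congrFun (congrFun h j) i
  simp only [ofRowSets] at hji
  split_ifs at hji <;> simp_all

theorem sum_ofRowSets (s : Fin N → Finset (Fin k)) (i : Fin N) :
    ∑ j, ofRowSets s j i = #(s i) := by
  simp [ofRowSets]

theorem eq_ofRowSets_of_le_one {A : Fin k → Fin N → ℕ} (hA : ∀ j i, A j i ≤ 1) :
    A = ofRowSets fun i => {j | A j i = 1} := by
  funext j i
  rcases Nat.le_one_iff_eq_zero_or_eq_one.mp (hA j i) with h | h <;> simp [ofRowSets, h]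

def rowSets (ℓ : Fin N → ℕ) (k : ℕ) : Finset (Fin N → Finset (Fin k)) :=
  Fintype.piFinset fun i => powersetCard (ℓ i) univ

theorem mem_rowSets {ℓ : Fin N → ℕ} {s : Fin N → Finset (Fin k)} :
    s ∈ rowSets ℓ k ↔ ∀ i, #(s i) = ℓ i := by
  simp [rowSets]

def coveringRowSets (ℓ : Fin N → ℕ) (k : ℕ) : Finset (Fin N → Finset (Fin k)) :=
  {s ∈ rowSets ℓ k | ∀ j, ∃ i, j ∈ s i}

theorem card_rowSets_avoiding (ℓ : Fin N → ℕ) (t : Finset (Fin k)) :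
    #{s ∈ rowSets ℓ k | ∀ j ∈ t, ∀ i, j ∉ s i} = ∏ i, (k - #t).choose (ℓ i) := by
  have : {s ∈ rowSets ℓ k | ∀ j ∈ t, ∀ i, j ∉ s i} =
      Fintype.piFinset fun i => powersetCard (ℓ i) tᶜ := by
    ext s
    simp only [mem_filter, rowSets, Fintype.mem_piFinset, mem_powersetCard, subset_univ, true_and,
      subset_compl_iff_disjoint_right, disjoint_left]
    grind
  simp [this, card_compl]

theorem card_coveringRowSets (ℓ : Fin N → ℕ) (k : ℕ) :
    (#(coveringRowSets ℓ k) : ℤ) =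
      ∑ j ∈ range (k + 1), (-1 : ℤ) ^ j * k.choose j * ∏ i, ((k - j).choose (ℓ i) : ℤ) := by
  let uncovering (j : Fin k) : Finset (Fin N → Finset (Fin k)) := {s | ∀ i, j ∉ s i}
  have hie := inclusion_exclusion_sum_inf_compl (G := ℤ) univ uncovering
    (fun s => if s ∈ rowSets ℓ k then 1 else 0)
  have hcover :
      {s ∈ univ.inf fun j => (uncovering j)ᶜ | s ∈ rowSets ℓ k} = coveringRowSets ℓ k := by
    ext s
    simp [uncovering, coveringRowSets, mem_inf, and_comm]
  have havoid (t : Finset (Fin k)) :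
      {s ∈ t.inf uncovering | s ∈ rowSets ℓ k} = {s ∈ rowSets ℓ k | ∀ j ∈ t, ∀ i, j ∉ s i} := by
    ext s
    simp [uncovering, mem_inf, and_comm]
  simp only [sum_boole, smul_eq_mul, hcover, havoid, card_rowSets_avoiding] at hie
  rw [hie, sum_powerset_apply_card (fun m => (-1 : ℤ) ^ m * ((∏ i, (k - m).choose (ℓ i) : ℕ) : ℤ))]
  simp [mul_assoc, mul_left_comm]

theorem sup_le_and_le_sum_of_mem_coveringRowSets {ℓ : Fin N → ℕ} {s : Fin N → Finset (Fin k)}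
    (hs : s ∈ coveringRowSets ℓ k) : univ.sup ℓ ≤ k ∧ k ≤ ∑ i, ℓ i := by
  simp only [coveringRowSets, mem_filter, mem_rowSets] at hs
  obtain ⟨hcard, hcover⟩ := hs
  refine ⟨Finset.sup_le fun i _ => ?_, ?_⟩
  · simpa [hcard i] using card_le_univ (s i)
  · have : univ.biUnion s = univ := eq_univ_of_forall fun j => by simpa using hcover j
    calc k = #(univ.biUnion s) := by simp [this]
      _ ≤ ∑ i, #(s i) := card_biUnion_le
      _ = ∑ i, ℓ i := by simp [hcard]

theorem mem_image_ofRowSets_coveringRowSets {ℓ : Fin N → ℕ} {A : Fin k → Fin N → ℕ} :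
    A ∈ (coveringRowSets ℓ k).image ofRowSets ↔
      (∀ j, A j ∈ {v : Fin N → ℕ | (∀ i, v i ≤ 1) ∧ v ≠ 0}) ∧ ∀ i, ∑ j, A j i = ℓ i := by
  constructor
  · intro hmem
    obtain ⟨s, hs, rfl⟩ := mem_image.mp hmem
    obtain ⟨hcard, hcover⟩ := mem_filter.mp hs
    refine ⟨fun j => ⟨fun i => ?_, fun hzero => ?_⟩, fun i => ?_⟩
    · unfold ofRowSets
      split <;> omega
    · obtain ⟨i, hi⟩ := hcover j
      simpa [ofRowSets, hi] using congrFun hzero i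
    · rw [sum_ofRowSets, mem_rowSets.mp hcard i]
  · rintro ⟨hcol, hrow⟩
    have hA := eq_ofRowSets_of_le_one fun j i => (hcol j).1 i
    rw [hA]
    refine mem_image_of_mem _ (mem_filter.mpr ⟨mem_rowSets.mpr fun i => ?_, fun j => ?_⟩)
    · exact (sum_ofRowSets _ i).symm.trans (by rw [← hA, hrow])
    · obtain ⟨i, hi⟩ := Function.ne_iff.mp (hcol j).2
      exact ⟨i, by simpa using (Nat.le_one_iff_eq_zero_or_eq_one.mp ((hcol j).1 i)).resolve_left hi⟩

end Alignment

open Alignment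

theorem stmt_16_general (N : ℕ) (ℓ : Fin N → ℕ) :
    (alignCount N {v : Fin N → ℕ | (∀ i, v i ≤ 1) ∧ v ≠ 0} ℓ : ℤ) =
      ∑ k ∈ Finset.Icc (Finset.univ.sup ℓ) (∑ i, ℓ i),
        ∑ j ∈ Finset.range (k + 1),
          (-1 : ℤ) ^ j * k.choose j * ∏ i, ((k - j).choose (ℓ i) : ℤ) := by
  have hcount : alignCount N {v : Fin N → ℕ | (∀ i, v i ≤ 1) ∧ v ≠ 0} ℓ =
      #((Icc (univ.sup ℓ) (∑ i, ℓ i)).sigma fun k => (coveringRowSets ℓ k).image ofRowSets) := by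
    refine Nat.subtype_card _ fun A => ?_
    rw [mem_sigma, mem_image_ofRowSets_coveringRowSets, and_iff_right_iff_imp]
    intro hA
    obtain ⟨s, hs, -⟩ := mem_image.mp (mem_image_ofRowSets_coveringRowSets.mpr hA)
    exact mem_Icc.mpr (sup_le_and_le_sum_of_mem_coveringRowSets hs)
  rw [hcount, card_sigma, Nat.cast_sum]
  refine sum_congr rfl fun k _ => ?_
  rw [card_image_of_injective _ ofRowSets_injective, card_coveringRowSets]

theorem stmt_16 (N : ℕ) (hN : 1 ≤ N) (ℓ : Fin N → ℕ) :
    (alignCount N {v : Fin N → ℕ | (∀ i, v i ≤ 1) ∧ v ≠ 0} ℓ : ℤ) =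
      ∑ k ∈ Finset.Icc (Finset.univ.sup ℓ) (∑ i, ℓ i),
        ∑ j ∈ Finset.range (k + 1),
          (-1 : ℤ) ^ j * k.choose j * ∏ i, ((k - j).choose (ℓ i) : ℤ) :=
  stmt_16_general N ℓ
end

section
/- With S = {(s₁,…,s_N) : 0 ≤ sᵢ ≤ 1} \ {(0,…,0)}, a_S(ℓ₁,…,ℓ_N) = Σ_{μ≥0} C(μ,ℓ₁)⋯C(μ,ℓ_N) / 2^{μ+1}, where the right-hand side is a convergent series of rationals summing to the integer a_S(ℓ₁,…,ℓ_N). -/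
open Finset

namespace Stmt17

variable (N : ℕ) (ℓ : Fin N → ℕ)

/-- matrices with `k` columns, all columns nonzero with entries ≤ 1, row sums `ℓ`. -/
def MT (k : ℕ) : Type := {A : Fin k → Fin N → ℕ //
  (∀ j, (∀ i, A j i ≤ 1) ∧ A j ≠ 0) ∧ ∀ i, ∑ j, A j i = ℓ i}

/-- matrices with `μ` columns, entries ≤ 1 (zero columns allowed), row sums `ℓ`. -/
def GT (μ : ℕ) : Type := {A : Fin μ → Fin N → ℕ //
  (∀ j i, A j i ≤ 1) ∧ ∀ i, ∑ j, A j i = ℓ i}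

instance (μ : ℕ) : Finite (GT N ℓ μ) := by
  let f : GT N ℓ μ → (Fin μ → Fin N → Fin 2) := fun A j i =>
    ⟨A.1 j i, by have := A.2.1 j i; omega⟩
  have hf : Function.Injective f := by
    intro A B h
    apply Subtype.ext; funext j i
    exact congrArg Fin.val (congrFun (congrFun h j) i)
  exact Finite.of_injective f hf

instance (k : ℕ) : Finite (MT N ℓ k) := by
  let f : MT N ℓ k → GT N ℓ k := fun A => ⟨A.1, fun j i => (A.2.1 j).1 i, A.2.2⟩
  have hf : Function.Injective f := by
    intro A B h
    apply Subtype.ext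
    have : (f A).1 = (f B).1 := congrArg Subtype.val h
    exact this
  exact Finite.of_injective f hf

theorem MT_isEmpty {k : ℕ} (hk : ∑ i, ℓ i < k) : IsEmpty (MT N ℓ k) := by
  constructor
  rintro ⟨A, hcol, hrow⟩
  have h1 : ∀ j : Fin k, 1 ≤ ∑ i, A j i := by
    intro j
    by_contra h
    push_neg at h
    refine (hcol j).2 (funext fun i => ?_)
    show A j i = 0
    have h2 : A j i ≤ ∑ i, A j i := Finset.single_le_sum (f := fun i => A j i)
      (fun i _ => Nat.zero_le _) (Finset.mem_univ i)
    omega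
  have : (k : ℕ) ≤ ∑ i, ℓ i := by
    calc k = ∑ _j : Fin k, 1 := by simp
    _ ≤ ∑ j, ∑ i, A j i := Finset.sum_le_sum fun j _ => h1 j
    _ = ∑ i, ∑ j, A j i := Finset.sum_comm
    _ = ∑ i, ℓ i := by simp [hrow]
  omega

/-- `GT` is equivalent to tuples of `ℓ i`-subsets of `Fin μ`. -/
def GTEquiv (μ : ℕ) : GT N ℓ μ ≃ (∀ i, {s : Finset (Fin μ) // s.card = ℓ i}) where
  toFun A := fun i => ⟨univ.filter (fun j => A.1 j i = 1), by
    rw [Finset.card_filter]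
    rw [← A.2.2 i]
    refine Finset.sum_congr rfl fun j _ => ?_
    have := A.2.1 j i
    split <;> omega⟩
  invFun s := ⟨fun j i => if j ∈ (s i).1 then 1 else 0,
    ⟨fun j i => by dsimp only; split <;> simp, fun i => by
      simp [Finset.sum_ite_mem, (s i).2]⟩⟩
  left_inv := by
    intro A
    apply Subtype.ext; funext j i
    simp only [Finset.mem_filter, Finset.mem_univ, true_and]
    have := A.2.1 j i
    split <;> omega
  right_inv := by
    intro s
    funext i
    apply Subtype.ext
    ext j
    by_cases h : j ∈ (s i).1 <;> simp [h]

theorem card_GT (μ : ℕ) : Nat.card (GT N ℓ μ) = ∏ i, μ.choose (ℓ i) := by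
  rw [Nat.card_congr (GTEquiv N ℓ μ), Nat.card_pi]
  refine Finset.prod_congr rfl fun i _ => ?_
  rw [Nat.card_eq_fintype_card, Fintype.card_finset_len, Fintype.card_fin]

lemma nat_card_sigma {ι : Type*} [Fintype ι] (f : ι → Type*) [∀ i, Finite (f i)] :
    Nat.card (Σ i, f i) = ∑ i, Nat.card (f i) := by
  haveI : ∀ i, Fintype (f i) := fun i => Fintype.ofFinite _
  simp [Nat.card_eq_fintype_card, Fintype.card_sigma]

/-- matrices in `GT` with support (set of nonzero columns) `T` correspond to
matrices in `MT` with `T.card` columns. -/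
def fiberEquiv (μ : ℕ) (T : Finset (Fin μ)) :
    {A : GT N ℓ μ // univ.filter (fun j => A.1 j ≠ 0) = T} ≃ MT N ℓ T.card where
  toFun A :=
    ⟨fun j => A.1.1 ((T.orderIsoOfFin rfl j : T) : Fin μ),
     ⟨fun j => ⟨fun i => A.1.2.1 _ i, by
        have hm : ((T.orderIsoOfFin rfl j : T) : Fin μ) ∈ T := (T.orderIsoOfFin rfl j).2
        have hm' := (Finset.ext_iff.mp A.2 _).mpr hm
        exact (Finset.mem_filter.mp hm').2⟩,
      fun i => by
        have h1 : ∑ j : Fin T.card, A.1.1 ((T.orderIsoOfFin rfl j : T) : Fin μ) i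
            = ∑ x : T, A.1.1 (x : Fin μ) i :=
          Fintype.sum_equiv (T.orderIsoOfFin rfl).toEquiv _ _ (fun j => rfl)
        have h2 : ∀ x ∈ univ, x ∉ T → A.1.1 x i = 0 := by
          intro x _ hx
          have hx' : x ∉ univ.filter (fun j => A.1.1 j ≠ 0) :=
            fun hc => hx ((Finset.ext_iff.mp A.2 x).mp hc)
          simp only [Finset.mem_filter, Finset.mem_univ, true_and, not_not] at hx'
          simp [hx']
        rw [h1, Finset.sum_coe_sort T (fun x => A.1.1 x i),
          Finset.sum_subset (Finset.subset_univ T) h2]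
        exact A.1.2.2 i⟩⟩
  invFun B :=
    ⟨⟨fun j i => if h : j ∈ T then B.1 ((T.orderIsoOfFin rfl).symm ⟨j, h⟩) i else 0,
      ⟨fun j i => by show dite _ _ _ ≤ 1; split; exacts [(B.2.1 _).1 i, Nat.zero_le 1],
       fun i => by
        have h2 : ∀ x ∈ univ, x ∉ T →
            (if h : x ∈ T then B.1 ((T.orderIsoOfFin rfl).symm ⟨x, h⟩) i else 0) = 0 := by
          intro x _ hx; rw [dif_neg hx]
        rw [← Finset.sum_subset (Finset.subset_univ T) h2,
          ← Finset.sum_coe_sort T]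
        have h3 : ∀ x : T, (if h : (x : Fin μ) ∈ T then
            B.1 ((T.orderIsoOfFin rfl).symm ⟨x, h⟩) i else 0)
            = B.1 ((T.orderIsoOfFin rfl).symm x) i := by
          intro x; rw [dif_pos x.2]
        rw [Finset.sum_congr rfl (fun x _ => h3 x)]
        rw [← Fintype.sum_equiv (T.orderIsoOfFin rfl).toEquiv (fun j => B.1 j i)
          (fun x => B.1 ((T.orderIsoOfFin rfl).symm x) i) (fun j => by simp)]
        exact B.2.2 i⟩⟩,
     by
      ext j
      simp only [Finset.mem_filter, Finset.mem_univ, true_and]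
      constructor
      · intro hne
        by_contra h
        exact hne (funext fun i => by simp [dif_neg h])
      · intro hj
        have hB := (B.2.1 ((T.orderIsoOfFin rfl).symm ⟨j, hj⟩)).2
        refine fun h0 => hB (funext fun i => ?_)
        have := congrFun h0 i
        simpa [dif_pos hj] using this⟩
  left_inv := by
    rintro ⟨⟨A, hA⟩, hT⟩
    apply Subtype.ext; apply Subtype.ext; funext j i
    dsimp only
    split_ifs with h
    · rw [OrderIso.apply_symm_apply]
    · have h' : j ∉ univ.filter (fun j => A j ≠ 0) :=
        fun hc => h ((Finset.ext_iff.mp hT j).mp hc)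
      simp only [Finset.mem_filter, Finset.mem_univ, true_and, not_not] at h'
      simp [h']
  right_inv := by
    intro B
    apply Subtype.ext; funext j
    funext i
    dsimp only
    rw [dif_pos (T.orderIsoOfFin rfl j).2]
    rw [Subtype.coe_eta, OrderIso.symm_apply_apply]

theorem card_GT' (μ : ℕ) :
    Nat.card (GT N ℓ μ) = ∑ k ∈ range (μ + 1), μ.choose k * Nat.card (MT N ℓ k) := by
  classical
  have e0 : GT N ℓ μ ≃ Σ T : Finset (Fin μ), MT N ℓ T.card :=
    ((Equiv.sigmaFiberEquiv (fun A : GT N ℓ μ => univ.filter (fun j => A.1 j ≠ 0))).symm.trans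
      (Equiv.sigmaCongrRight (fiberEquiv N ℓ μ)))
  rw [Nat.card_congr e0, nat_card_sigma]
  rw [← Finset.powerset_univ, Finset.sum_powerset]
  simp only [Finset.card_univ, Fintype.card_fin]
  refine Finset.sum_congr rfl fun k _ => ?_
  rw [Finset.sum_powersetCard k univ (fun m => Nat.card (MT N ℓ m))]
  simp [Finset.card_univ, mul_comm]

theorem card_GT'' (μ : ℕ) :
    Nat.card (GT N ℓ μ) = ∑ k ∈ range (∑ i, ℓ i + 1), μ.choose k * Nat.card (MT N ℓ k) := by
  set L := ∑ i, ℓ i with hL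
  have hz : ∀ k, L < k → Nat.card (MT N ℓ k) = 0 := fun k hk =>
    @Nat.card_of_isEmpty _ (MT_isEmpty N ℓ hk)
  have h1 : ∑ k ∈ range (μ + 1), μ.choose k * Nat.card (MT N ℓ k)
      = ∑ k ∈ range (μ + L + 2), μ.choose k * Nat.card (MT N ℓ k) := by
    refine Finset.sum_subset (by apply Finset.range_subset_range.mpr; omega) fun k _ hk => ?_
    simp only [Finset.mem_range, not_lt] at hk
    rw [Nat.choose_eq_zero_of_lt (by omega), zero_mul]
  have h2 : ∑ k ∈ range (L + 1), μ.choose k * Nat.card (MT N ℓ k)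
      = ∑ k ∈ range (μ + L + 2), μ.choose k * Nat.card (MT N ℓ k) := by
    refine Finset.sum_subset (by apply Finset.range_subset_range.mpr; omega) fun k _ hk => ?_
    simp only [Finset.mem_range, not_lt] at hk
    rw [hz k (by omega), mul_zero]
  rw [card_GT', h1, ← h2]

theorem alignCount_eq :
    alignCount N {v : Fin N → ℕ | (∀ i, v i ≤ 1) ∧ v ≠ 0} ℓ
      = ∑ k ∈ range (∑ i, ℓ i + 1), Nat.card (MT N ℓ k) := by
  set L := ∑ i, ℓ i with hL
  have e1 : {A : Σ k : ℕ, Fin k → Fin N → ℕ //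
      (∀ j, A.2 j ∈ {v : Fin N → ℕ | (∀ i, v i ≤ 1) ∧ v ≠ 0}) ∧ ∀ i, ∑ j, A.2 j i = ℓ i}
      ≃ Σ k : ℕ, MT N ℓ k :=
    { toFun := fun A => ⟨A.1.1, A.1.2, A.2⟩
      invFun := fun A => ⟨⟨A.1, A.2.1⟩, A.2.2⟩
      left_inv := fun _ => rfl
      right_inv := fun _ => rfl }
  have e2 : (Σ k : ℕ, MT N ℓ k) ≃ Σ k : Fin (L + 1), MT N ℓ k :=
    { toFun := fun x => ⟨⟨x.1, Nat.lt_succ_of_le (le_of_not_gt fun hc =>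
        (MT_isEmpty N ℓ hc).false x.2)⟩, x.2⟩
      invFun := fun y => ⟨y.1.1, y.2⟩
      left_inv := fun _ => rfl
      right_inv := fun _ => rfl }
  unfold alignCount
  rw [Nat.card_congr (e1.trans e2), nat_card_sigma]
  exact Fin.sum_univ_eq_sum_range (fun k => Nat.card (MT N ℓ k)) (L + 1)

lemma hasSum_choose_div (k : ℕ) :
    HasSum (fun μ : ℕ => (μ.choose k : ℝ) / 2 ^ (μ + 1)) 1 := by
  have h0 : HasSum (fun n : ℕ => (((n + k).choose k : ℝ)) * (1 / 2 : ℝ) ^ n)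
      (1 / (1 - 1 / 2) ^ (k + 1)) :=
    hasSum_choose_mul_geometric_of_norm_lt_one k (by norm_num)
  have hval : (1 : ℝ) / (1 - 1 / 2) ^ (k + 1) * (1 / 2) ^ (k + 1) = 1 := by
    rw [show (1 : ℝ) - 1 / 2 = 1 / 2 by norm_num, one_div ((1 / 2 : ℝ) ^ (k + 1)),
      inv_mul_cancel₀ (pow_ne_zero _ (by norm_num))]
  have h1 : HasSum (fun n : ℕ => (((n + k).choose k : ℝ)) / 2 ^ (n + k + 1)) 1 := by
    have h := h0.mul_right ((1 / 2 : ℝ) ^ (k + 1))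
    rw [hval] at h
    have hfe : (fun n : ℕ => ((n + k).choose k : ℝ) / 2 ^ (n + k + 1))
        = fun n : ℕ => ((n + k).choose k : ℝ) * (1 / 2 : ℝ) ^ n * (1 / 2) ^ (k + 1) := by
      funext n
      rw [mul_assoc, ← pow_add, div_eq_mul_inv, one_div, inv_pow, add_assoc]
    rw [hfe]
    exact h
  have h2 := (hasSum_nat_add_iff (f := fun μ : ℕ => (μ.choose k : ℝ) / 2 ^ (μ + 1)) k).mp h1
  have hz : ∑ i ∈ range k, (i.choose k : ℝ) / 2 ^ (i + 1) = 0 :=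
    Finset.sum_eq_zero fun i hi => by
      rw [Nat.choose_eq_zero_of_lt (Finset.mem_range.mp hi), Nat.cast_zero, zero_div]
  rw [hz, add_zero] at h2
  exact h2

end Stmt17

theorem stmt_17 (N : ℕ) (hN : 1 ≤ N) (ℓ : Fin N → ℕ) :
    (alignCount N {v : Fin N → ℕ | (∀ i, v i ≤ 1) ∧ v ≠ 0} ℓ : ℝ) =
      ∑' μ : ℕ, (∏ i, (μ.choose (ℓ i) : ℝ)) / 2 ^ (μ + 1) := by
  classical
  set L := ∑ i, ℓ i with hL
  have key : ∀ μ : ℕ, (∏ i, (μ.choose (ℓ i) : ℝ))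
      = ∑ k ∈ Finset.range (L + 1), (μ.choose k : ℝ) * (Nat.card (Stmt17.MT N ℓ k) : ℝ) := by
    intro μ
    calc ∏ i, (μ.choose (ℓ i) : ℝ) = ((∏ i, μ.choose (ℓ i) : ℕ) : ℝ) := by push_cast; rfl
    _ = ((Nat.card (Stmt17.GT N ℓ μ) : ℕ) : ℝ) := by rw [Stmt17.card_GT]
    _ = _ := by rw [Stmt17.card_GT'' N ℓ μ]; push_cast; rfl
  have hterm : ∀ μ : ℕ, (∏ i, (μ.choose (ℓ i) : ℝ)) / 2 ^ (μ + 1)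
      = ∑ k ∈ Finset.range (L + 1),
          ((μ.choose k : ℝ) / 2 ^ (μ + 1)) * (Nat.card (Stmt17.MT N ℓ k) : ℝ) := by
    intro μ
    rw [key μ, Finset.sum_div]
    exact Finset.sum_congr rfl fun k _ => mul_div_right_comm _ _ _
  rw [tsum_congr hterm,
    Summable.tsum_finsetSum (fun k _ => ((Stmt17.hasSum_choose_div k).summable.mul_right _)),
    Stmt17.alignCount_eq N ℓ]
  push_cast
  refine Finset.sum_congr rfl fun k _ => ?_
  rw [((Stmt17.hasSum_choose_div k).mul_right _).tsum_eq, one_mul]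
end
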